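/- arXiv:1903.00331 — 3 statements merged into one kernel-verified Lean document; each statement's English description precedes it below -/
import Mathlib

section
/- For every n ∈ ℕ there exists an n-particle configuration C_n whose atomic positions form a subset of the square lattice ℤ², which has alternating charge distribution (bonded atoms always carry opposite charges), and whose energy equals E(C_n) = −⌊2n − 2√n⌋. In particular, the minimal energy over all n-particle configurations is at most −⌊2n − 2√n⌋. -/
open scoped BigOperators
open Real

noncomputable section

/-- Points of the plane. -/
abbrev Pt := EuclideanSpace ℝ (Fin 2)

/-- An `n`-particle configuration: positions in the plane together with charges in `{-1, 1}`. -/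
structure Config (n : ℕ) where
  x : Fin n → Pt
  q : Fin n → ℤ
  hq : ∀ i, q i = 1 ∨ q i = -1

/-- The configurational energy
`E(C) = (1/2) Σ_{i≠j, q_i=q_j} V_r(|x_i-x_j|) + (1/2) Σ_{i≠j, q_i≠q_j} V_a(|x_i-x_j|)`. -/
def energy (Va Vr : ℝ → EReal) {n : ℕ} (C : Config n) : EReal :=
  ((1/2 : ℝ) : EReal) * (∑ i : Fin n, ∑ j : Fin n,
      if i ≠ j ∧ C.q i = C.q j then Vr (dist (C.x i) (C.x j)) else 0)
  + ((1/2 : ℝ) : EReal) * (∑ i : Fin n, ∑ j : Fin n,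
      if i ≠ j ∧ C.q i ≠ C.q j then Va (dist (C.x i) (C.x j)) else 0)

/-- Slope of (the real part of) `V` between `a` and `r`. -/
def slope' (V : ℝ → EReal) (a r : ℝ) : ℝ := ((V r).toReal - (V a).toReal) / (r - a)

/-- Assumptions [i]-[viii] on the attractive-repulsive potential `Va` and the repulsive
potential `Vr`, with reference parameter `r₀ ∈ [1, (2 sin(π/7))⁻¹)`.  The left derivative of
`Vr` at `√2` is encoded as the supremum of slopes from the left, and the right derivative
of `Vr` at `1` as the infimum of slopes from the right (`Vr` is convex and real-valued
on `[1,∞)`, so these coincide with the one-sided derivatives). -/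
structure PotentialAssumptions (r₀ : ℝ) (Va Vr : ℝ → EReal) : Prop where
  r₀_lb : 1 ≤ r₀
  r₀_ub : r₀ < (2 * Real.sin (Real.pi / 7))⁻¹
  va_inf : ∀ r : ℝ, r < 1 → Va r = ⊤
  va_one : Va 1 = ((-1 : ℝ) : EReal)
  va_gt : ∀ r : ℝ, r ≠ 1 → ((-1 : ℝ) : EReal) < Va r
  va_nonpos : ∀ r : ℝ, 1 ≤ r → Va r ≤ 0
  va_zero : ∀ r : ℝ, r₀ < r → Va r = 0
  vr_inf : ∀ r : ℝ, r < 1 → Vr r = ⊤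
  vr_nonneg : ∀ r : ℝ, 1 ≤ r → 0 ≤ Vr r
  vr_fin : ∀ r : ℝ, 1 ≤ r → Vr r < ⊤
  vr_antitone : ∀ r s : ℝ, 1 ≤ r → r ≤ s → Vr s ≤ Vr r
  vr_convex : ConvexOn ℝ (Set.Ici (1 : ℝ)) (fun r => (Vr r).toReal)
  vr_quant : ((6 : ℝ) : EReal) < Vr (2 * r₀ * Real.sin (Real.pi / 5))
  vr_zero_iff : ∀ r : ℝ, Vr r = 0 ↔ Real.sqrt 2 ≤ r
  slope_left : sSup (slope' Vr (Real.sqrt 2) '' Set.Ico 1 (Real.sqrt 2))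
      < -16 / (Real.sqrt 2 * Real.pi)
  slope_right : ∀ r : ℝ, 1 < r → r ≤ r₀ →
      -(1/2) * sInf (slope' Vr 1 '' Set.Ioi (1 : ℝ)) < slope' Va 1 r

/-- The net charge `Q(C) = Σ_i q_i`. -/
def netCharge {n : ℕ} (C : Config n) : ℤ := ∑ i : Fin n, C.q i

/-- The bond graph: atoms are bonded iff `0 < |x_i - x_j| ≤ r₀`. -/
def bondGraph (r₀ : ℝ) {n : ℕ} (C : Config n) : SimpleGraph (Fin n) where
  Adj i j := C.x i ≠ C.x j ∧ dist (C.x i) (C.x j) ≤ r₀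
  symm := ⟨fun i j h => ⟨h.1.symm, by rw [dist_comm]; exact h.2⟩⟩
  loopless := ⟨fun i h => h.1 rfl⟩

/-- The number of bonds. -/
def numBonds (r₀ : ℝ) {n : ℕ} (C : Config n) : ℕ := (bondGraph r₀ C).edgeSet.ncard

/-- A ground state minimizes the energy among all `n`-particle configurations. -/
def IsGroundState (Va Vr : ℝ → EReal) {n : ℕ} (C : Config n) : Prop :=
  ∀ C' : Config n, energy Va Vr C ≤ energy Va Vr C'

/-- Alternating charge distribution: bonded atoms have opposite charges. -/
def AlternatingCharges (r₀ : ℝ) {n : ℕ} (C : Config n) : Prop :=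
  ∀ i j : Fin n, (bondGraph r₀ C).Adj i j → C.q i ≠ C.q j

/-- A bond is acyclic if it lies on no simple cycle of the graph. -/
def IsAcyclicBond {n : ℕ} (G : SimpleGraph (Fin n)) (e : Sym2 (Fin n)) : Prop :=
  e ∈ G.edgeSet ∧ ∀ (u : Fin n) (c : G.Walk u u), c.IsCycle → e ∉ c.edges

/-- `v` lies on a simple cycle of `G` whose edge set is `S`. -/
def LiesOnCycleWithEdges {n : ℕ} (G : SimpleGraph (Fin n)) (v : Fin n)
    (S : Set (Sym2 (Fin n))) : Prop :=
  ∃ (u : Fin n) (c : G.Walk u u), c.IsCycle ∧ v ∈ c.support ∧ S = {e | e ∈ c.edges}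

/-- A bridge: an acyclic bond contained in a simple path connecting two vertices lying
in two distinct cycles. -/
def IsBridgeBond {n : ℕ} (G : SimpleGraph (Fin n)) (e : Sym2 (Fin n)) : Prop :=
  IsAcyclicBond G e ∧ ∃ (u v : Fin n) (p : G.Walk u v) (S₁ S₂ : Set (Sym2 (Fin n))),
    p.IsPath ∧ e ∈ p.edges ∧ LiesOnCycleWithEdges G u S₁ ∧ LiesOnCycleWithEdges G v S₂ ∧
    S₁ ≠ S₂

/-- A flag: an acyclic bond which is not a bridge. -/
def IsFlagBond {n : ℕ} (G : SimpleGraph (Fin n)) (e : Sym2 (Fin n)) : Prop :=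
  IsAcyclicBond G e ∧ ¬ IsBridgeBond G e

/-- The square lattice `ℤ² ⊂ ℝ²`. -/
def squareLattice : Set Pt := {p | (∃ a : ℤ, p 0 = (a : ℝ)) ∧ (∃ b : ℤ, p 1 = (b : ℝ))}

/-- The set of attainable net charges `Q_net(n) = (2ℤ + n mod 2) ∩ [-n, n]`. -/
def Qnet (n : ℕ) : Set ℤ := {q | |q| ≤ (n : ℤ) ∧ q % 2 = (n : ℤ) % 2}

/-- The minimal energy among `n`-particle configurations with net charge `qnet`. -/
def Emin (Va Vr : ℝ → EReal) (n : ℕ) (qnet : ℤ) : EReal :=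
  sInf ((fun C : Config n => energy Va Vr C) '' {C : Config n | netCharge C = qnet})

/-- The saturation net charge
`q_sat^n = min {q ∈ Q_net(n) ∩ [0,n] : E^n_min(q) = -2n + 2q}`. -/
def qsat (Va Vr : ℝ → EReal) (n : ℕ) : ℤ :=
  sInf {qnet : ℤ | qnet ∈ Qnet n ∧ 0 ≤ qnet ∧
    Emin Va Vr n qnet = (((-2) * (n : ℝ) + 2 * (qnet : ℝ) : ℝ) : EReal)}

/-- A configuration is optimal (for its own net charge) if it attains `E^n_min(Q(C))`. -/
def IsOptimal (Va Vr : ℝ → EReal) {n : ℕ} (C : Config n) : Prop :=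
  energy Va Vr C = Emin Va Vr n (netCharge C)

/-- The function `φ` characterizing the saturation net charge. -/
def phi (n : ℕ) : ℤ :=
  if n = 0 then 0
  else if n = 1 then 1
  else if n % 2 = 1 then 2 * ⌊(-1/2 : ℝ) + (1/2) * Real.sqrt (2 * (n : ℝ) - 5)⌋ + 3
  else 2 * ⌊(1/2 : ℝ) * Real.sqrt (2 * (n : ℝ) - 4)⌋ + 2

/-- The neighborhood `N(x_i) = (X_n \ {x_i}) ∩ {|x - x_i| ≤ r₀}`. -/
def nbhd (r₀ : ℝ) {n : ℕ} (C : Config n) (i : Fin n) : Set Pt :=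
  {y | (∃ j : Fin n, C.x j = y) ∧ y ≠ C.x i ∧ dist y (C.x i) ≤ r₀}

/-- The square `S_n = {x ∈ ℤ² : x₁,x₂ ≥ 0, |x|_∞ ≤ ⌊√n - 1⌋}`. -/
def Sn (n : ℕ) : Set Pt :=
  {p | ∃ a b : ℤ, p 0 = (a : ℝ) ∧ p 1 = (b : ℝ) ∧ 0 ≤ a ∧ 0 ≤ b ∧
    max a b ≤ ⌊Real.sqrt (n : ℝ) - 1⌋}

/-- The diamond `D_n = {x ∈ ℤ² : |x|₁ ≤ ⌊(-1 + √(2n-1))/2⌋}`. -/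
def Dn (n : ℕ) : Set Pt :=
  {p | ∃ a b : ℤ, p 0 = (a : ℝ) ∧ p 1 = (b : ℝ) ∧
    |a| + |b| ≤ ⌊((-1) + Real.sqrt (2 * (n : ℝ) - 1)) / 2⌋}

/-- The square `S_{k²} = {x ∈ ℤ² : x₁,x₂ ≥ 0, |x|_∞ ≤ k - 1}` with `k²` lattice points. -/
def SqK (k : ℕ) : Set Pt :=
  {p | ∃ a b : ℤ, p 0 = (a : ℝ) ∧ p 1 = (b : ℝ) ∧ 0 ≤ a ∧ 0 ≤ b ∧
    max a b ≤ (k : ℤ) - 1}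

/-- `β(n) = 2n - 2√n`. -/
def beta (n : ℕ) : ℝ := 2 * (n : ℝ) - 2 * Real.sqrt (n : ℝ)

end

/-!
Put the `n` particles on the first `n` points of `ℤ²` in row-major order, with rows of width
`w = ⌈√n⌉`, and charge them like a checkerboard. Distinct lattice points at squared distance `d`
carry equal charges iff `d` is even, so equal charges are at distance `≥ √2` and feel no
repulsion, while opposite charges are at distance `1` or `≥ √3 > r₀` (as
`r₀ < (2 sin(π/7))⁻¹ < √2`). The energy is therefore minus the number of nearest-neighbour
pairs, and the row-major layout has `(n - ⌈n/w⌉) + (n - w) = 2n - ⌈2√n⌉ = ⌊2n - 2√n⌋` of them.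
-/

open Finset

theorem EReal.coe_finset_sum {α : Type*} (s : Finset α) (f : α → ℝ) :
    ((∑ i ∈ s, f i : ℝ) : EReal) = ∑ i ∈ s, (f i : EReal) :=
  map_sum (⟨⟨(↑), EReal.coe_zero⟩, EReal.coe_add⟩ : ℝ →+ EReal) f s

theorem Real.inv_two_mul_sin_pi_div_seven_lt_sqrt_two : (2 * Real.sin (π / 7))⁻¹ < √2 := by
  have hπ : π / 7 < 0.45 := by linarith [Real.pi_lt_d2]
  have hsin : 0.4 < Real.sin (π / 7) := by
    have := Real.sin_gt_sub_cube (x := π / 7) (by positivity)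
    nlinarith [Real.pi_gt_three, pow_le_pow_left₀ (by positivity) hπ.le 3]
  calc (2 * Real.sin (π / 7))⁻¹ < (2 * 0.4)⁻¹ := by gcongr
    _ = 1.25 := by norm_num
    _ < √2 := by rw [Real.lt_sqrt (by norm_num)]; norm_num

theorem PotentialAssumptions.r₀_lt_sqrt_two {r₀ : ℝ} {Va Vr : ℝ → EReal}
    (h : PotentialAssumptions r₀ Va Vr) : r₀ < √2 :=
  h.r₀_ub.trans Real.inv_two_mul_sin_pi_div_seven_lt_sqrt_two

theorem Int.sq_add_sq_eq_one_iff {x y : ℤ} : x ^ 2 + y ^ 2 = 1 ↔ x.natAbs + y.natAbs = 1 := by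
  rw [← Int.natAbs_sq x, ← Int.natAbs_sq y]
  generalize x.natAbs = a, y.natAbs = b
  norm_cast
  constructor
  · intro h
    have ha : a ≤ 1 := by nlinarith
    have hb : b ≤ 1 := by nlinarith
    interval_cases a <;> interval_cases b <;> omega
  · intro h
    obtain ⟨rfl, rfl⟩ | ⟨rfl, rfl⟩ : (a = 0 ∧ b = 1) ∨ (a = 1 ∧ b = 0) := by omega
    all_goals rfl

theorem sum_range_sum_range_ite_eq_two_mul {R : ℕ → ℕ → Prop} [DecidableRel R]
    (hR : ∀ i j, R i j ↔ R j i) (hR' : ∀ i, ¬ R i i) (n : ℕ) :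
    ∑ i ∈ range n, ∑ j ∈ range n, (if R i j then 1 else 0) =
      2 * ∑ j ∈ range n, ∑ i ∈ range j, (if R i j then 1 else 0) := by
  induction n with
  | zero => simp
  | succ n ih =>
    have hflip : ∑ j ∈ range n, (if R n j then 1 else 0) =
        ∑ i ∈ range n, (if R i n then 1 else 0) :=
      sum_congr rfl fun j _ => by simp only [hR n j]
    simp only [sum_range_succ, sum_add_distrib, ih, hflip, if_neg (hR' n)]
    ring

namespace SquareLattice

def sqDist (u v : ℤ × ℤ) : ℤ := (u.1 - v.1) ^ 2 + (u.2 - v.2) ^ 2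

theorem sqDist_comm (u v : ℤ × ℤ) : sqDist u v = sqDist v u := by
  unfold sqDist; ring

theorem sqDist_self (u : ℤ × ℤ) : sqDist u u = 0 := by
  simp [sqDist]

theorem one_le_sqDist {u v : ℤ × ℤ} (h : u ≠ v) : 1 ≤ sqDist u v := by
  unfold sqDist
  by_contra! h0
  apply h
  ext <;> nlinarith [sq_nonneg (u.1 - v.1), sq_nonneg (u.2 - v.2)]

def checker (u : ℤ × ℤ) : ℤ := if Even (u.1 + u.2) then 1 else -1

theorem checker_eq_checker_iff {u v : ℤ × ℤ} :
    checker u = checker v ↔ Even (sqDist u v) := by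
  have : Even (sqDist u v) ↔ (Even (u.1 + u.2) ↔ Even (v.1 + v.2)) := by
    simp only [sqDist, Int.even_add, Int.even_sub, Int.even_pow, ne_eq, OfNat.ofNat_ne_zero,
      not_false_eq_true, and_true]
    tauto
  rw [this, checker, checker]
  by_cases hu : Even (u.1 + u.2) <;> by_cases hv : Even (v.1 + v.2) <;> simp [hu, hv]

def toPt (u : ℤ × ℤ) : Pt := !₂[(u.1 : ℝ), (u.2 : ℝ)]

theorem dist_toPt (u v : ℤ × ℤ) : dist (toPt u) (toPt v) = √(sqDist u v) := by
  simp [EuclideanSpace.dist_eq, toPt, sqDist, Real.dist_eq, sq_abs]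

def latticeConfig {n : ℕ} (p : Fin n → ℤ × ℤ) : Config n where
  x i := toPt (p i)
  q i := checker (p i)
  hq i := by unfold checker; split_ifs <;> simp

theorem range_latticeConfig_subset {n : ℕ} (p : Fin n → ℤ × ℤ) :
    Set.range (latticeConfig p).x ⊆ squareLattice := by
  rintro _ ⟨i, rfl⟩
  exact ⟨⟨(p i).1, by simp [latticeConfig, toPt]⟩, ⟨(p i).2, by simp [latticeConfig, toPt]⟩⟩

section LatticeConfig

variable {n : ℕ} {p : Fin n → ℤ × ℤ}

theorem sqrt_two_le_dist_latticeConfig (hp : Function.Injective p) {i j : Fin n} (hij : i ≠ j)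
    (hq : (latticeConfig p).q i = (latticeConfig p).q j) :
    √2 ≤ dist ((latticeConfig p).x i) ((latticeConfig p).x j) := by
  obtain ⟨k, hk⟩ := checker_eq_checker_iff.1 hq
  have := one_le_sqDist (hp.ne hij)
  simp only [latticeConfig, dist_toPt]
  gcongr
  exact_mod_cast (show (2 : ℤ) ≤ sqDist (p i) (p j) by omega)

theorem sqrt_two_lt_dist_latticeConfig (hp : Function.Injective p) {i j : Fin n} (hij : i ≠ j)
    (hq : (latticeConfig p).q i ≠ (latticeConfig p).q j) (h1 : sqDist (p i) (p j) ≠ 1) :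
    √2 < dist ((latticeConfig p).x i) ((latticeConfig p).x j) := by
  obtain ⟨k, hk⟩ := Int.not_even_iff_odd.1 (mt checker_eq_checker_iff.2 hq)
  have := one_le_sqDist (hp.ne hij)
  simp only [latticeConfig, dist_toPt]
  gcongr
  exact_mod_cast (show (2 : ℤ) < sqDist (p i) (p j) by omega)

theorem alternatingCharges_latticeConfig (hp : Function.Injective p) {r₀ : ℝ} (hr : r₀ < √2) :
    AlternatingCharges r₀ (latticeConfig p) := by
  rintro i j ⟨hne, hle⟩ hq
  have hij : i ≠ j := fun h => hne (congrArg _ h)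
  linarith [sqrt_two_le_dist_latticeConfig hp hij hq]

def unitPairCount (p : Fin n → ℤ × ℤ) : ℕ :=
  ∑ i, ∑ j, if sqDist (p i) (p j) = 1 then 1 else 0

theorem energy_latticeConfig (hp : Function.Injective p) {r₀ : ℝ} {Va Vr : ℝ → EReal}
    (h : PotentialAssumptions r₀ Va Vr) :
    energy Va Vr (latticeConfig p) = ((-(unitPairCount p / 2) : ℝ) : EReal) := by
  set C := latticeConfig p
  have hVr (i j : Fin n) :
      (if i ≠ j ∧ C.q i = C.q j then Vr (dist (C.x i) (C.x j)) else 0) = 0 := by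
    split_ifs with hc
    · exact (h.vr_zero_iff _).2 (sqrt_two_le_dist_latticeConfig hp hc.1 hc.2)
    · rfl
  have hVa (i j : Fin n) : (if i ≠ j ∧ C.q i ≠ C.q j then Va (dist (C.x i) (C.x j)) else 0) =
      ((-if sqDist (p i) (p j) = 1 then 1 else 0 : ℝ) : EReal) := by
    by_cases h1 : sqDist (p i) (p j) = 1
    · have hij : i ≠ j := fun hij => by simp [hij, sqDist] at h1
      have hq : C.q i ≠ C.q j := fun hq => by
        simpa [h1] using checker_eq_checker_iff.1 hq
      have hd : dist (C.x i) (C.x j) = 1 := by simp [C, latticeConfig, dist_toPt, h1]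
      simp [hij, hq, hd, h1, h.va_one]
    · rw [if_neg h1, neg_zero]
      split_ifs with hc
      · exact h.va_zero _
          (h.r₀_lt_sqrt_two.trans (sqrt_two_lt_dist_latticeConfig hp hc.1 hc.2 h1))
      · rfl
  simp only [energy, hVr, hVa, sum_const_zero, ← EReal.coe_finset_sum, mul_zero,
    zero_add, ← EReal.coe_mul, unitPairCount]
  congr 1
  push_cast [sum_neg_distrib]
  ring

end LatticeConfig

def rowMajor (w m : ℕ) : ℤ × ℤ := ((m % w : ℕ), (m / w : ℕ))

theorem rowMajor_injective (w : ℕ) : Function.Injective (rowMajor w) := by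
  intro a b h
  simp only [rowMajor, Prod.mk.injEq, Nat.cast_inj] at h
  rw [← Nat.div_add_mod a w, ← Nat.div_add_mod b w, h.1, h.2]

theorem sqDist_rowMajor_eq_one_iff {w i m : ℕ} (hw : 0 < w) (him : i < m) :
    sqDist (rowMajor w i) (rowMajor w m) = 1 ↔ (i + 1 = m ∧ ¬ w ∣ m) ∨ i + w = m := by
  have hi := Nat.div_add_mod i w
  have hm := Nat.div_add_mod m w
  have hb := Nat.mod_lt i hw
  have hd := Nat.mod_lt m hw
  have hac : i / w ≤ m / w := Nat.div_le_div_right him.le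
  have hsucc (h : i + 1 = m ∧ ¬ w ∣ m) : m / w = i / w := by
    rw [← h.1, Nat.succ_div, if_neg (h.1 ▸ h.2), add_zero]
  have hadd (h : i + w = m) : m / w = i / w + 1 := by rw [← h, Nat.add_div_right i hw]
  rw [sqDist, Int.sq_add_sq_eq_one_iff, Nat.dvd_iff_mod_eq_zero]
  rw [Nat.dvd_iff_mod_eq_zero] at hsucc
  simp only [rowMajor]
  generalize i / w = a, i % w = b, m / w = c, m % w = d at *
  constructor
  · intro h
    obtain rfl | rfl : c = a ∨ c = a + 1 := by omega
    · omega
    · rw [mul_add_one] at hm; omega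
  · rintro (h | h)
    · have := hsucc h; subst this; omega
    · have := hadd h; subst this; rw [mul_add_one] at hm; omega

theorem sum_range_ite_sqDist_rowMajor {w m : ℕ} (hw : 0 < w) :
    ∑ i ∈ range m, (if sqDist (rowMajor w i) (rowMajor w m) = 1 then 1 else 0) =
      (if w ∣ m then 0 else 1) + (if w ≤ m then 1 else 0) := by
  have hsplit : ∀ i ∈ range m, (if sqDist (rowMajor w i) (rowMajor w m) = 1 then 1 else 0) =
      (if i + 1 = m ∧ ¬ w ∣ m then 1 else 0) + (if i + w = m then 1 else 0) := by
    intro i hi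
    simp only [sqDist_rowMajor_eq_one_iff hw (mem_range.1 hi)]
    by_cases h1 : i + w = m
    · have : ¬ (i + 1 = m ∧ ¬ w ∣ m) := fun h => h.2 (by rw [show w = 1 by omega]; exact one_dvd m)
      simp [h1, this]
    · simp [h1]
  rw [sum_congr rfl hsplit, sum_add_distrib]
  congr 1
  · by_cases hm : w ∣ m
    · simp [hm]
    · have hm0 : m ≠ 0 := by rintro rfl; exact hm (dvd_zero w)
      rw [sum_eq_single (m - 1), if_neg hm, if_pos ⟨by omega, hm⟩]
      · intro i _ hne; rw [if_neg]; omega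
      · simp only [mem_range]; omega
  · rw [sum_eq_single (m - w)]
    · split_ifs <;> omega
    · intro i _ hne; rw [if_neg]; omega
    · simp only [mem_range]; intro h; rw [if_neg]; omega

/-- The horizontal plus the vertical nearest-neighbour bonds among the first `n` points of
`rowMajor w`. -/
def rowMajorBondCount (w n : ℕ) : ℕ := (n - 1 - (n - 1) / w) + (n - w)

theorem sum_range_rowMajor_backward_degree {w : ℕ} (hw : 0 < w) (n : ℕ) :
    ∑ m ∈ range n, ((if w ∣ m then 0 else 1) + (if w ≤ m then 1 else 0)) =
      rowMajorBondCount w n := by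
  induction n with
  | zero => simp [rowMajorBondCount]
  | succ n ih =>
    rw [sum_range_succ, ih, rowMajorBondCount, rowMajorBondCount]
    rcases n with _ | k
    · simp [hw.ne']; omega
    · have := Nat.div_le_self k w
      rw [Nat.add_sub_cancel, Nat.add_sub_cancel, Nat.succ_div]
      split_ifs <;> omega

theorem unitPairCount_rowMajor {w : ℕ} (hw : 0 < w) (n : ℕ) :
    unitPairCount (fun i : Fin n => rowMajor w i) = 2 * rowMajorBondCount w n := by
  set R : ℕ → ℕ → Prop := fun i j => sqDist (rowMajor w i) (rowMajor w j) = 1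
  have hrange (i : ℕ) :
      ∑ j : Fin n, (if R i j then 1 else 0) = ∑ j ∈ range n, if R i j then 1 else 0 :=
    Fin.sum_univ_eq_sum_range (fun j => if R i j then 1 else 0) n
  have hR : ∀ i j, R i j ↔ R j i := fun i j => by simp only [R, sqDist_comm]
  have hR' : ∀ i, ¬ R i i := fun i => by simp [R, sqDist_self]
  calc unitPairCount (fun i : Fin n => rowMajor w i)
      = ∑ i ∈ range n, ∑ j ∈ range n, (if R i j then 1 else 0) := by
        change ∑ i : Fin n, ∑ j : Fin n, (if R i j then 1 else 0) = _
        simp only [hrange]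
        exact Fin.sum_univ_eq_sum_range (fun i => ∑ j ∈ range n, if R i j then 1 else 0) n
    _ = 2 * rowMajorBondCount w n := by
      rw [sum_range_sum_range_ite_eq_two_mul hR hR',
        sum_congr rfl fun m _ => sum_range_ite_sqDist_rowMajor hw,
        sum_range_rowMajor_backward_degree hw]

/-- `⌈√n⌉` for `n ≥ 1`. -/
def rowMajorWidth (n : ℕ) : ℕ := Nat.sqrt (n - 1) + 1

theorem floor_beta_eq_rowMajorBondCount (n : ℕ) :
    ⌊beta n⌋ = rowMajorBondCount (rowMajorWidth n) n := by
  rcases n with _ | N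
  · simp [beta, rowMajorBondCount]
  simp only [rowMajorBondCount, rowMajorWidth, Nat.add_sub_cancel]
  have hs := Nat.sqrt_le' N
  have hs' := Nat.lt_succ_sqrt' N
  have hq := Nat.div_mul_le_self N (Nat.sqrt N + 1)
  have hq' := Nat.lt_mul_div_succ N (Nat.sqrt N).succ_pos
  generalize Nat.sqrt N = s at *
  generalize N / (s + 1) = q at *
  have hqs : q = s ∨ q + 1 = s := by
    rcases lt_trichotomy q s with h | h | h
    · right
      by_contra h'
      have : q + 2 ≤ s := by omega
      nlinarith
    · exact .inl h
    · exfalso; nlinarith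
  -- `s + q + 2 = ⌈2√(N + 1)⌉`
  have hupper : 4 * (N + 1) ≤ (s + q + 2) ^ 2 := by nlinarith
  have hlower : (s + q + 1) ^ 2 < 4 * (N + 1) := by rcases hqs with rfl | rfl <;> nlinarith
  rw [Int.floor_eq_iff, beta]
  push_cast [Nat.cast_sub (show q ≤ N by nlinarith), Nat.cast_sub (show s ≤ N by nlinarith)]
  have hx := Real.sq_sqrt (show (0 : ℝ) ≤ N + 1 by positivity)
  have hx0 := Real.sqrt_nonneg ((N : ℝ) + 1)
  generalize √((N : ℝ) + 1) = x at *
  have hupper' : (4 * (N + 1) : ℝ) ≤ (s + q + 2) ^ 2 := by exact_mod_cast hupper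
  have hlower' : ((s + q + 1) ^ 2 : ℝ) < 4 * (N + 1) := by exact_mod_cast hlower
  have h1 : 2 * x ≤ s + q + 2 := by nlinarith
  have h2 : s + q + 1 < 2 * x := by nlinarith
  constructor <;> linarith

end SquareLattice

open SquareLattice

/-- For every `n` there is a configuration, subset of the square lattice with
alternating charge distribution, of energy `-⌊2n - 2√n⌋`; in particular the minimal energy
is at most `-⌊2n - 2√n⌋`. -/
theorem upper_bound_construction (r₀ : ℝ) (Va Vr : ℝ → EReal)
    (h : PotentialAssumptions r₀ Va Vr) (n : ℕ) :
    (∃ C : Config n, Set.range C.x ⊆ squareLattice ∧ AlternatingCharges r₀ C ∧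
      energy Va Vr C = (((-(⌊beta n⌋ : ℤ) : ℝ)) : EReal)) ∧
    sInf ((fun C : Config n => energy Va Vr C) '' Set.univ)
      ≤ (((-(⌊beta n⌋ : ℤ) : ℝ)) : EReal) := by
  have hp : Function.Injective (fun i : Fin n => rowMajor (rowMajorWidth n) i) :=
    (rowMajor_injective _).comp Fin.val_injective
  have hE : energy Va Vr (latticeConfig fun i : Fin n => rowMajor (rowMajorWidth n) i) =
      ((-(⌊beta n⌋ : ℤ) : ℝ) : EReal) := by
    rw [energy_latticeConfig hp h, unitPairCount_rowMajor (w := rowMajorWidth n) (Nat.succ_pos _),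
      floor_beta_eq_rowMajorBondCount]
    congr 1
    push_cast
    ring
  refine ⟨⟨_, range_latticeConfig_subset _,
    alternatingCharges_latticeConfig hp h.r₀_lt_sqrt_two, hE⟩, ?_⟩
  exact hE ▸ sInf_le ⟨_, Set.mem_univ _, rfl⟩
end

section
/- Let φ be defined by φ(0)=0, φ(1)=1, φ(n) = 2⌊−1/2 + (1/2)√(2n−5)⌋ + 3 for odd n ≥ 3, and φ(n) = 2⌊(1/2)√(2n−4)⌋ + 2 for even n ≥ 2. Then for every n ≥ 2, writing n = 1 + 2k² + 2k + m with k ∈ ℕ₀ and 1 ≤ m ≤ 4k+4, one has: φ(n) = 2 + 2k if 1 ≤ m ≤ 2k+2 and m is odd; φ(n) = 3 + 2k if 1 ≤ m ≤ 2k+2 and m is even; φ(n) = 4 + 2k if 2k+3 ≤ m ≤ 4k+4 and m is odd; and φ(n) = 3 + 2k if 2k+3 ≤ m ≤ 4k+4 and m is even. -/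
open scoped BigOperators
open Real

/-!
For even `n = 2j + 2` the defining formula collapses to `φ(n) = 2⌊√j⌋ + 2`, and for odd
`n = 2j + 3` to `φ(n) = 2t + 3` with `t` the largest integer such that `t(t + 1) ≤ j`.
In the representation `n = 1 + 2k² + 2k + m` one has `j = k² + k + ⌊(m - 1)/2⌋`: for odd `m`
this lies in `[k², (k + 1)²)` or `[(k + 1)², (k + 2)²)` according as `m ≤ 2k + 2` or not,
and for even `m` it always lies in `[k(k + 1), (k + 1)(k + 2))`.
-/

theorem floor_half_sqrt_eq {x : ℝ} {t : ℕ} (h₁ : (2 * t : ℝ) ^ 2 ≤ x)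
    (h₂ : x < (2 * t + 2 : ℝ) ^ 2) : ⌊(1/2 : ℝ) * √x⌋ = t := by
  have hlo := Real.le_sqrt_of_sq_le h₁
  have hhi := (Real.sqrt_lt' (by positivity)).2 h₂
  rw [Int.floor_eq_iff]
  push_cast
  constructor <;> linarith

theorem floor_half_sqrt_sub_half_eq {x : ℝ} {t : ℕ} (h₁ : (2 * t + 1 : ℝ) ^ 2 ≤ x)
    (h₂ : x < (2 * t + 3 : ℝ) ^ 2) : ⌊(-1/2 : ℝ) + (1/2) * √x⌋ = t := by
  have hlo := Real.le_sqrt_of_sq_le h₁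
  have hhi := (Real.sqrt_lt' (by positivity)).2 h₂
  rw [Int.floor_eq_iff]
  push_cast
  constructor <;> linarith

theorem phi_two_mul_add_two {j t : ℕ} (h₁ : t ^ 2 ≤ j) (h₂ : j < (t + 1) ^ 2) :
    phi (2 * j + 2) = 2 * t + 2 := by
  have hx : (2 * (2 * j + 2 : ℕ) : ℝ) - 4 = 4 * j := by push_cast; ring
  have h₁' : (t : ℝ) ^ 2 ≤ j := by exact_mod_cast h₁
  have h₂' : (j : ℝ) < (t + 1) ^ 2 := by exact_mod_cast h₂
  rw [phi, if_neg (by omega), if_neg (by omega), if_neg (by omega), hx,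
    floor_half_sqrt_eq (t := t) (by linarith) (by linarith)]

theorem phi_two_mul_add_three {j t : ℕ} (h₁ : t * (t + 1) ≤ j) (h₂ : j < (t + 1) * (t + 2)) :
    phi (2 * j + 3) = 2 * t + 3 := by
  have hx : (2 * (2 * j + 3 : ℕ) : ℝ) - 5 = 4 * j + 1 := by push_cast; ring
  have h₁' : (t : ℝ) * (t + 1) ≤ j := by exact_mod_cast h₁
  have h₂' : (j : ℝ) < (t + 1) * (t + 2) := by exact_mod_cast h₂
  rw [phi, if_neg (by omega), if_neg (by omega), if_pos (by omega), hx,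
    floor_half_sqrt_sub_half_eq (t := t) (by linarith) (by linarith)]

theorem phi_representation_general (n k m : ℕ)
    (hrep : n = 1 + 2 * k ^ 2 + 2 * k + m) :
    (1 ≤ m → m ≤ 2 * k + 2 → m % 2 = 1 → phi n = 2 + 2 * (k : ℤ)) ∧
    (1 ≤ m → m ≤ 2 * k + 2 → m % 2 = 0 → phi n = 3 + 2 * (k : ℤ)) ∧
    (2 * k + 3 ≤ m → m ≤ 4 * k + 4 → m % 2 = 1 → phi n = 4 + 2 * (k : ℤ)) ∧
    (2 * k + 3 ≤ m → m ≤ 4 * k + 4 → m % 2 = 0 → phi n = 3 + 2 * (k : ℤ)) := by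
  subst hrep
  refine ⟨fun _ hm₂ hodd => ?_, fun hm₁ hm₂ heven => ?_, fun hm₁ hm₂ hodd => ?_,
    fun hm₁ hm₂ heven => ?_⟩
  · obtain ⟨i, rfl⟩ : ∃ i, m = 2 * i + 1 := ⟨m / 2, by omega⟩
    rw [show 1 + 2 * k ^ 2 + 2 * k + (2 * i + 1) = 2 * (k ^ 2 + k + i) + 2 by ring,
      phi_two_mul_add_two (t := k) (by linarith) (by linarith)]
    ring
  · obtain ⟨i, rfl⟩ : ∃ i, m = 2 * i + 2 := ⟨m / 2 - 1, by omega⟩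
    rw [show 1 + 2 * k ^ 2 + 2 * k + (2 * i + 2) = 2 * (k ^ 2 + k + i) + 3 by ring,
      phi_two_mul_add_three (t := k) (by linarith) (by linarith)]
    ring
  · obtain ⟨i, rfl⟩ : ∃ i, m = 2 * i + 1 := ⟨m / 2, by omega⟩
    rw [show 1 + 2 * k ^ 2 + 2 * k + (2 * i + 1) = 2 * (k ^ 2 + k + i) + 2 by ring,
      phi_two_mul_add_two (t := k + 1) (by linarith) (by linarith)]
    push_cast
    ring
  · obtain ⟨i, rfl⟩ : ∃ i, m = 2 * i + 2 := ⟨m / 2 - 1, by omega⟩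
    rw [show 1 + 2 * k ^ 2 + 2 * k + (2 * i + 2) = 2 * (k ^ 2 + k + i) + 3 by ring,
      phi_two_mul_add_three (t := k) (by linarith) (by linarith)]
    ring

/-- Equivalent representation of `φ`: writing `n = 1 + 2k² + 2k + m` with
`1 ≤ m ≤ 4k+4`, the value `φ(n)` is `2+2k`, `3+2k`, `4+2k`, or `3+2k` according to the
position and parity of `m`. -/
theorem phi_representation (n k m : ℕ) (hn : 2 ≤ n)
    (hrep : n = 1 + 2 * k ^ 2 + 2 * k + m) (hm1 : 1 ≤ m) (hm2 : m ≤ 4 * k + 4) :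
    (1 ≤ m → m ≤ 2 * k + 2 → m % 2 = 1 → phi n = 2 + 2 * (k : ℤ)) ∧
    (1 ≤ m → m ≤ 2 * k + 2 → m % 2 = 0 → phi n = 3 + 2 * (k : ℤ)) ∧
    (2 * k + 3 ≤ m → m ≤ 4 * k + 4 → m % 2 = 1 → phi n = 4 + 2 * (k : ℤ)) ∧
    (2 * k + 3 ≤ m → m ≤ 4 * k + 4 → m % 2 = 0 → phi n = 3 + 2 * (k : ℤ)) :=
  phi_representation_general n k m hrep
end

section
/- Let φ be defined by φ(0)=0, φ(1)=1, φ(n) = 2⌊−1/2 + (1/2)√(2n−5)⌋ + 3 for odd n ≥ 3, and φ(n) = 2⌊(1/2)√(2n−4)⌋ + 2 for even n ≥ 2. Then: (i) φ(n) ≤ φ(n−1)+1 and φ(n) ≤ φ(n+1)+1 for all n ∈ ℕ; (ii) φ(n) ≤ φ(n+2) for all n ∈ ℕ; (iii) φ(n) ≤ φ(n−3)+1 for all n ≥ 5; (iv) φ(n) ≤ φ(n−5)+1 for all n ≥ 11; (v) φ(n₁−t) + φ(n₂+t) ≤ φ(n₁) + φ(n₂) + 6 for all t ≤ n₁ ≤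 n₂; (vi) φ(n)+2 ≤ φ(m) + φ(n−m) for all m with 3 ≤ m and 3 ≤ n−m, whenever n ≥ 11; and (vii) there exists m₀ ∈ ℕ such that φ(n) + 52 ≤ φ(m) + φ(n−m) for all m with m₀ ≤ m and m₀ ≤ n−m. -/
open scoped BigOperators
open Real

/-!
For `n ≥ 2`, `φ n` is the integer of the parity of `n` with `(φ n - 2)² ≤ 2n - 4 < (φ n)²`,
so it lies in `(√(2n - 4), √(2n - 4) + 2]`; parity sharpens both bounds by `n % 2`. Everything
is integer arithmetic with these bounds. Comparing `φ` at nearby arguments gives (i)–(iv); (v)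
is the concavity of `√`. For superadditivity, `φ (m + k) + s ≥ φ m + φ k` would force
`(φ m + φ k - s - 2)² ≤ (φ m)² + (φ k)² + 2`, i.e. `(φ m - s - 2)(φ k - s - 2)` small; this
gives (vii), and (vi) except when `φ m = 3`, which happens only at `m = 3, 5` and is (iii), (iv).
-/

lemma sq_le_and_lt_sq_of_le_sqrt_of_sqrt_lt {N a b : ℤ} (hN : 0 ≤ N) (ha : 0 ≤ a)
    (hla : (a : ℝ) ≤ √N) (hlb : √N < b) : a ^ 2 ≤ N ∧ N < b ^ 2 := by
  have hb : (0 : ℝ) < b := (Real.sqrt_nonneg _).trans_lt hlb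
  constructor
  · exact_mod_cast (Real.le_sqrt (by exact_mod_cast ha) (by exact_mod_cast hN)).1 hla
  · exact_mod_cast (Real.sqrt_lt' hb).1 hlb

lemma phi_zero : phi 0 = 0 := by simp [phi]

lemma phi_one : phi 1 = 1 := by simp [phi]

lemma phi_spec {n : ℕ} (hn : 2 ≤ n) :
    (phi n - 2) ^ 2 ≤ 2 * n - 4 - n % 2 ∧ 2 * n - 2 - n % 2 ≤ phi n ^ 2 ∧
      phi n % 2 = n % 2 := by
  rcases Nat.mod_two_eq_zero_or_one n with he | ho
  · set f := ⌊(1 / 2 : ℝ) * √(2 * (n : ℝ) - 4)⌋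
    have hphi : phi n = 2 * f + 2 := by simp [phi, f, he]; omega
    have hfl : (f : ℝ) ≤ 1 / 2 * √(2 * (n : ℝ) - 4) := Int.floor_le _
    have hfu : 1 / 2 * √(2 * (n : ℝ) - 4) < f + 1 := Int.lt_floor_add_one _
    have hf : 0 ≤ f := Int.floor_nonneg.2 (by positivity)
    obtain ⟨hlo, hhi⟩ := sq_le_and_lt_sq_of_le_sqrt_of_sqrt_lt (N := 2 * n - 4) (a := 2 * f)
      (b := 2 * f + 2) (by omega) (by omega) (by push_cast; linarith) (by push_cast; linarith)
    have hsq : (2 * f + 2) ^ 2 = 4 * (f + 1) ^ 2 := by ring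
    rw [hphi, add_sub_cancel_right, hsq]
    rw [hsq] at hhi
    omega
  · set f := ⌊(-1 / 2 : ℝ) + (1 / 2) * √(2 * (n : ℝ) - 5)⌋
    have hphi : phi n = 2 * f + 3 := by simp [phi, f, ho]; omega
    have hfl : (f : ℝ) ≤ -1 / 2 + 1 / 2 * √(2 * (n : ℝ) - 5) := Int.floor_le _
    have hfu : -1 / 2 + 1 / 2 * √(2 * (n : ℝ) - 5) < f + 1 := Int.lt_floor_add_one _
    have hf : 0 ≤ f := Int.floor_nonneg.2 (by
      have : (1 : ℝ) ≤ √(2 * (n : ℝ) - 5) := Real.one_le_sqrt.2 (by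
        have : (3 : ℝ) ≤ n := by exact_mod_cast (by omega : 3 ≤ n)
        linarith)
      linarith)
    obtain ⟨hlo, hhi⟩ := sq_le_and_lt_sq_of_le_sqrt_of_sqrt_lt (N := 2 * n - 5) (a := 2 * f + 1)
      (b := 2 * f + 3) (by omega) (by omega) (by push_cast; linarith) (by push_cast; linarith)
    have hsub : 2 * f + 3 - 2 = 2 * f + 1 := by ring
    have hsq : (2 * f + 3) ^ 2 = 4 * (f ^ 2 + 3 * f + 2) + 1 := by ring
    rw [hphi, hsub, hsq]
    rw [hsq] at hhi
    omega

lemma phi_emod_two (n : ℕ) : phi n % 2 = n % 2 := by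
  rcases lt_or_ge n 2 with hn | hn
  · interval_cases n <;> simp [phi_zero, phi_one]
  · exact (phi_spec hn).2.2

lemma phi_sub_two_sq_le {n : ℕ} (hn : 2 ≤ n) : (phi n - 2) ^ 2 ≤ 2 * n - 4 - n % 2 :=
  (phi_spec hn).1

lemma two_mul_sub_two_le_phi_sq (n : ℕ) : 2 * n - 2 - n % 2 ≤ phi n ^ 2 := by
  rcases lt_or_ge n 2 with hn | hn
  · interval_cases n <;> simp [phi_zero, phi_one]
  · exact (phi_spec hn).2.1

lemma phi_le_one {n : ℕ} (hn : n ≤ 1) : phi n ≤ 1 := by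
  interval_cases n <;> simp [phi_zero, phi_one]

lemma two_le_phi {n : ℕ} (hn : 2 ≤ n) : 2 ≤ phi n := by
  have h1 := phi_sub_two_sq_le hn
  have h2 := two_mul_sub_two_le_phi_sq n
  nlinarith

lemma phi_nonneg (n : ℕ) : 0 ≤ phi n := by
  rcases lt_or_ge n 2 with hn | hn
  · interval_cases n <;> simp [phi_zero, phi_one]
  · linarith [two_le_phi hn]

lemma three_le_phi {n : ℕ} (hn : 3 ≤ n) : 3 ≤ phi n := by
  have h1 := two_le_phi (by omega : 2 ≤ n)
  have h2 := two_mul_sub_two_le_phi_sq n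
  have h3 := phi_emod_two n
  by_contra! h
  have : phi n = 2 := by omega
  rw [this] at h2 h3
  omega

lemma phi_eq_three_iff {n : ℕ} : phi n = 3 ↔ n = 3 ∨ n = 5 := by
  have hpar := phi_emod_two n
  constructor
  · intro h
    have hn : 2 ≤ n := by by_contra!; linarith [phi_le_one (by omega : n ≤ 1)]
    have hsq := two_mul_sub_two_le_phi_sq n
    rw [h] at hsq hpar
    omega
  · intro hn
    have hsq := phi_sub_two_sq_le (by omega : 2 ≤ n)
    have h3 := three_le_phi (by omega : 3 ≤ n)
    have : phi n ≤ 4 := by nlinarith [(by omega : (n : ℤ) ≤ 5 ∧ 0 ≤ (n : ℤ) % 2)]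
    omega

lemma four_le_phi {n : ℕ} (hn : 6 ≤ n) : 4 ≤ phi n := by
  have h3 := three_le_phi (by omega : 3 ≤ n)
  have : phi n ≠ 3 := fun h => by have := phi_eq_three_iff.1 h; omega
  omega

lemma lt_phi_of_sq_add_three_lt {c : ℤ} {n : ℕ} (h : c ^ 2 + 3 < 2 * n) : c < phi n := by
  have hsq := two_mul_sub_two_le_phi_sq n
  exact lt_of_pow_lt_pow_left₀ 2 (phi_nonneg n) (by omega)

lemma phi_le_phi_add_one_of_le {m n : ℕ} (h : m ≤ n) : phi m ≤ phi n + 1 := by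
  rcases lt_or_ge m 2 with hm | hm
  · linarith [phi_le_one (by omega : m ≤ 1), phi_nonneg n]
  by_contra! hlt
  have hsq : phi n ^ 2 ≤ (phi m - 2) ^ 2 := pow_le_pow_left₀ (phi_nonneg n) (by omega) 2
  have := phi_sub_two_sq_le hm
  have := two_mul_sub_two_le_phi_sq n
  omega

lemma phi_le_phi_of_le_of_emod_two_eq {m n : ℕ} (h : m ≤ n) (hmn : m % 2 = n % 2) :
    phi m ≤ phi n := by
  have := phi_le_phi_add_one_of_le h
  have := phi_emod_two m
  have := phi_emod_two n
  omega

lemma phi_le_phi_sub_add_one {d n : ℕ} (hd : d % 2 = 1) (hdn : d ≤ n)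
    (h : (d : ℤ) - 1 ≤ phi (n - d)) : phi n ≤ phi (n - d) + 1 := by
  rcases lt_or_ge n 2 with hn | hn
  · linarith [phi_le_one (by omega : n ≤ 1), phi_nonneg (n - d)]
  have hpn := phi_emod_two n
  have hpc := phi_emod_two (n - d)
  by_contra! hlt
  have hgap : phi (n - d) + 1 ≤ phi n - 2 := by omega
  have hup := phi_sub_two_sq_le hn
  have hlow := two_mul_sub_two_le_phi_sq (n - d)
  have hsq : (phi (n - d) + 1) ^ 2 ≤ (phi n - 2) ^ 2 :=
    pow_le_pow_left₀ (by linarith [phi_nonneg (n - d)]) hgap 2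
  rw [show ((n - d : ℕ) : ℤ) = n - d by omega] at hlow hpc
  have : 2 * phi (n - d) + 1 ≤ 2 * d - 2 - n % 2 + (n - d) % 2 := by nlinarith
  omega

lemma phi_le_phi_sub_one_add_one (n : ℕ) : phi n ≤ phi (n - 1) + 1 := by
  rcases Nat.eq_zero_or_pos n with rfl | hn
  · simp
  · exact phi_le_phi_sub_add_one (by norm_num) hn (by push_cast; linarith [phi_nonneg (n - 1)])

lemma phi_le_phi_sub_three_add_one {n : ℕ} (hn : 5 ≤ n) : phi n ≤ phi (n - 3) + 1 :=
  phi_le_phi_sub_add_one (by norm_num) (by omega)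
    (by push_cast; linarith [two_le_phi (by omega : 2 ≤ n - 3)])

lemma phi_le_phi_sub_five_add_one {n : ℕ} (hn : 11 ≤ n) : phi n ≤ phi (n - 5) + 1 :=
  phi_le_phi_sub_add_one (by norm_num) (by omega)
    (by push_cast; linarith [four_le_phi (by omega : 6 ≤ n - 5)])

lemma phi_add_sub_two_sq_le {m k : ℕ} (hmk : 2 ≤ m + k) :
    (phi (m + k) - 2) ^ 2 ≤ phi m ^ 2 + phi k ^ 2 + 2 := by
  have hq := phi_sub_two_sq_le hmk
  have ha := two_mul_sub_two_le_phi_sq m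
  have hb := two_mul_sub_two_le_phi_sq k
  push_cast at hq
  omega

lemma phi_add_le (m k : ℕ) : phi (m + k) ≤ phi m + phi k + 3 := by
  have ha := phi_nonneg m
  have hb := phi_nonneg k
  rcases lt_or_ge (m + k) 2 with hmk | hmk
  · linarith [phi_le_one (by omega : m + k ≤ 1)]
  by_contra! hlt
  have hsq : (phi m + phi k + 2) ^ 2 ≤ (phi (m + k) - 2) ^ 2 :=
    pow_le_pow_left₀ (by omega) (by omega) 2
  nlinarith [phi_add_sub_two_sq_le hmk]

/-- The integer shadow of the concavity of `√`: `√x + √y ≤ √x' + √y'` whenever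
`x + y ≤ x' + y'` and `x * y ≤ x' * y'`. -/
lemma add_lt_add_of_sq_le_of_lt_sq {u v c d x y x' y' : ℤ} (hc : 0 ≤ c) (hd : 0 ≤ d)
    (hux : u ^ 2 ≤ x) (hvy : v ^ 2 ≤ y) (hx'c : x' < c ^ 2) (hy'd : y' < d ^ 2)
    (hx' : 0 ≤ x') (hy' : 0 ≤ y') (hsum : x + y ≤ x' + y') (hprod : x * y ≤ x' * y') :
    u + v < c + d := by
  have huv : u * v < c * d := by
    refine lt_of_pow_lt_pow_left₀ 2 (mul_nonneg hc hd) ?_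
    calc (u * v) ^ 2 = u ^ 2 * v ^ 2 := mul_pow u v 2
      _ ≤ x * y := mul_le_mul hux hvy (sq_nonneg v) (hux.trans' (sq_nonneg u))
      _ ≤ x' * y' := hprod
      _ < c ^ 2 * d ^ 2 := mul_lt_mul'' hx'c hy'd hx' hy'
      _ = (c * d) ^ 2 := (mul_pow c d 2).symm
  refine lt_of_pow_lt_pow_left₀ 2 (add_nonneg hc hd) ?_
  nlinarith

lemma phi_sub_add_phi_add_le {t n₁ n₂ : ℕ} (ht : t ≤ n₁) (h12 : n₁ ≤ n₂) :
    phi (n₁ - t) + phi (n₂ + t) ≤ phi n₁ + phi n₂ + 6 := by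
  rcases lt_or_ge (n₁ - t) 2 with hsmall | hbig
  · have := phi_le_one (by omega : n₁ - t ≤ 1)
    have := phi_le_phi_add_one_of_le (by omega : n₂ + t ≤ n₁ + n₂)
    have := phi_add_le n₁ n₂
    omega
  have hcast : ((n₁ - t : ℕ) : ℤ) = n₁ - t := by omega
  have hA := phi_sub_two_sq_le hbig
  have hB := phi_sub_two_sq_le (by omega : 2 ≤ n₂ + t)
  have hC := two_mul_sub_two_le_phi_sq n₁
  have hD := two_mul_sub_two_le_phi_sq n₂
  rw [hcast] at hA
  have key := add_lt_add_of_sq_le_of_lt_sq (u := phi (n₁ - t) - 2) (v := phi (n₂ + t) - 2)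
    (x := 2 * (n₁ - t) - 4) (y := 2 * (n₂ + t) - 4)
    (x' := 2 * n₁ - 4) (y' := 2 * n₂ - 4) (phi_nonneg n₁) (phi_nonneg n₂)
    (by omega) (by omega) (by omega) (by omega) (by omega) (by omega) (by omega) (by nlinarith)
  omega

lemma phi_add_lt_phi_add_phi {m k : ℕ} {s : ℤ} (hs : 0 ≤ s) (hm : s + 2 ≤ phi m)
    (hk : s + 2 ≤ phi k) (h : (s + 2) ^ 2 + 2 < 2 * (phi m - s - 2) * (phi k - s - 2)) :
    phi (m + k) + s < phi m + phi k := by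
  have hmk : 2 ≤ m + k := by
    by_contra!
    linarith [phi_le_one (by omega : m ≤ 1)]
  by_contra! hle
  have hsq : (phi m + phi k - s - 2) ^ 2 ≤ (phi (m + k) - 2) ^ 2 :=
    pow_le_pow_left₀ (by omega) (by omega) 2
  nlinarith [phi_add_sub_two_sq_le hmk]

lemma phi_add_add_two_le {m k : ℕ} (hn : 11 ≤ m + k) (hm : 3 ≤ m) (hk : 3 ≤ k) :
    phi (m + k) + 2 ≤ phi m + phi k := by
  have of_eq_three : ∀ {m k : ℕ}, 11 ≤ m + k → phi m = 3 →
      phi (m + k) + 2 ≤ phi m + phi k := by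
    intro m k hn hm
    have hshift : phi (m + k) ≤ phi (m + k - m) + 1 := by
      rcases phi_eq_three_iff.1 hm with rfl | rfl
      · exact phi_le_phi_sub_three_add_one (by omega)
      · exact phi_le_phi_sub_five_add_one hn
    rw [Nat.add_sub_cancel_left] at hshift
    omega
  by_cases hm3 : phi m = 3
  · exact of_eq_three hn hm3
  by_cases hk3 : phi k = 3
  · rw [add_comm m, add_comm (phi m)]
    exact of_eq_three (by omega) hk3
  have ha : 4 ≤ phi m := by have := three_le_phi hm; omega
  have hb : 4 ≤ phi k := by have := three_le_phi hk; omega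
  have hlt := phi_add_lt_phi_add_phi (m := m) (k := k) (s := 0) le_rfl (by omega) (by omega)
    (by nlinarith)
  have hpm := phi_emod_two m
  have hpk := phi_emod_two k
  have hpmk := phi_emod_two (m + k)
  push_cast at hpmk
  omega

lemma exists_phi_add_add_le : ∃ m₀ : ℕ, ∀ m k : ℕ, m₀ ≤ m → m₀ ≤ k →
    phi (m + k) + 52 ≤ phi m + phi k := by
  refine ⟨4200, fun m k hm hk => ?_⟩
  have ha : 91 ≤ phi m := lt_phi_of_sq_add_three_lt (c := 90) (by push_cast; omega)
  have hb : 91 ≤ phi k := lt_phi_of_sq_add_three_lt (c := 90) (by push_cast; omega)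
  have := phi_add_lt_phi_add_phi (m := m) (k := k) (s := 51) (by norm_num) (by omega)
    (by omega) (by nlinarith)
  omega

/-- Properties (i)-(vii) of the function `φ`. -/
theorem phi_properties :
    (∀ n : ℕ, phi n ≤ phi (n - 1) + 1 ∧ phi n ≤ phi (n + 1) + 1) ∧
    (∀ n : ℕ, phi n ≤ phi (n + 2)) ∧
    (∀ n : ℕ, 5 ≤ n → phi n ≤ phi (n - 3) + 1) ∧
    (∀ n : ℕ, 11 ≤ n → phi n ≤ phi (n - 5) + 1) ∧
    (∀ t n₁ n₂ : ℕ, t ≤ n₁ → n₁ ≤ n₂ →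
      phi (n₁ - t) + phi (n₂ + t) ≤ phi n₁ + phi n₂ + 6) ∧
    (∀ n m : ℕ, 11 ≤ n → 3 ≤ m → 3 ≤ n - m → m ≤ n →
      phi n + 2 ≤ phi m + phi (n - m)) ∧
    (∃ m₀ : ℕ, ∀ n m : ℕ, m₀ ≤ m → m₀ ≤ n - m → m ≤ n →
      phi n + 52 ≤ phi m + phi (n - m)) := by
  refine ⟨fun n => ⟨phi_le_phi_sub_one_add_one n, phi_le_phi_add_one_of_le n.le_succ⟩,
    fun n => phi_le_phi_of_le_of_emod_two_eq (by omega) (by omega),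
    fun n => phi_le_phi_sub_three_add_one, fun n => phi_le_phi_sub_five_add_one,
    fun t n₁ n₂ => phi_sub_add_phi_add_le, fun n m hn hm hk hmn => ?_, ?_⟩
  · have := phi_add_add_two_le (m := m) (k := n - m) (by omega) hm hk
    rwa [Nat.add_sub_cancel' hmn] at this
  · obtain ⟨m₀, hm₀⟩ := exists_phi_add_add_le
    refine ⟨m₀, fun n m hm hk hmn => ?_⟩
    have := hm₀ m (n - m) hm hk
    rwa [Nat.add_sub_cancel' hmn] at this
end
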